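/- Assume δ ≥ κ and there exists a [δ]^{<θ}-normal ideal on P_κ(λ). Then there exists D ∈ (∇^δ I_{κ,λ})* such that NS^{[δ]^{<θ}}_{κ,λ} = NS^{[|δ|]^{<θ}}_{κ,λ} | D. -/

import Mathlib

open Cardinal Set

namespace PklNormal

/-- `P_κ(l)`: the collection of subsets of (the set of ordinals below) `l`
of cardinality `< κ`. -/
def PSet (κ : Cardinal.{0}) (l : Ordinal.{0}) : Set (Set Ordinal.{0}) :=
  {a | a ⊆ Set.Iio l ∧ #↥a < Cardinal.lift.{1} κ}

/-- `e ∈ P_{|a ∩ σ|}(a ∩ γ)`. -/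
def inP (σ : Cardinal.{0}) (γ : Ordinal.{0}) (a e : Set Ordinal.{0}) : Prop :=
  e ⊆ a ∩ Set.Iio γ ∧ #↥e < #↥(a ∩ Set.Iio σ.ord)

/-- The collection `I_{κ,l}` of non-cofinal subsets of `P_κ(l)`. -/
def Ikl (κ : Cardinal.{0}) (l : Ordinal.{0}) : Set (Set (Set Ordinal.{0})) :=
  {B | B ⊆ PSet κ l ∧ ∃ a ∈ PSet κ l, ∀ b ∈ B, ¬ a ⊆ b}

/-- An ideal on `P_κ(l)`. -/
structure IsIdeal (κ : Cardinal.{0}) (l : Ordinal.{0})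
    (K : Set (Set (Set Ordinal.{0}))) : Prop where
  mem_subset : ∀ B ∈ K, B ⊆ PSet κ l
  subset_mem : ∀ B ∈ K, ∀ C ⊆ B, C ∈ K
  sUnion_mem : ∀ Y ⊆ K, Y.Nonempty → #↥Y < Cardinal.lift.{1} κ → ⋃₀ Y ∈ K
  nonCofinal_subset : Ikl κ l ⊆ K
  univ_not_mem : PSet κ l ∉ K

/-- `K⁺`: the subsets of `P_κ(l)` not in `K`. -/
def plus (κ : Cardinal.{0}) (l : Ordinal.{0}) (K : Set (Set (Set Ordinal.{0}))) :
    Set (Set (Set Ordinal.{0})) :=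
  {B | B ⊆ PSet κ l ∧ B ∉ K}

/-- `K*`: the subsets of `P_κ(l)` whose complement is in `K`. -/
def star (κ : Cardinal.{0}) (l : Ordinal.{0}) (K : Set (Set (Set Ordinal.{0}))) :
    Set (Set (Set Ordinal.{0})) :=
  {B | B ⊆ PSet κ l ∧ PSet κ l \ B ∈ K}

/-- `K|A`. -/
def restrict (κ : Cardinal.{0}) (l : Ordinal.{0}) (K : Set (Set (Set Ordinal.{0})))
    (A : Set (Set Ordinal.{0})) : Set (Set (Set Ordinal.{0})) :=
  {B | B ⊆ PSet κ l ∧ B ∩ A ∈ K}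

/-- `∇^{[γ]^{<σ}} J`. -/
def nabla (κ : Cardinal.{0}) (l : Ordinal.{0}) (σ : Cardinal.{0}) (γ : Ordinal.{0})
    (J : Set (Set (Set Ordinal.{0}))) : Set (Set (Set Ordinal.{0})) :=
  {B | ∃ F : Set Ordinal.{0} → Set (Set Ordinal.{0}),
    (∀ e ∈ PSet σ γ, F e ∈ J) ∧
    B ⊆ {a | a ∈ PSet κ l ∧ a ∩ Set.Iio σ.ord = ∅} ∪
      ⋃ e ∈ PSet σ γ, {a | a ∈ F e ∧ inP σ γ a e}}

/-- `J` is `[γ]^{<σ}`-normal. -/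
def IsNormal (κ : Cardinal.{0}) (l : Ordinal.{0}) (σ : Cardinal.{0}) (γ : Ordinal.{0})
    (J : Set (Set (Set Ordinal.{0}))) : Prop :=
  J = nabla κ l σ γ J

def IsNormalIdeal (κ : Cardinal.{0}) (l : Ordinal.{0}) (σ : Cardinal.{0}) (γ : Ordinal.{0})
    (J : Set (Set (Set Ordinal.{0}))) : Prop :=
  IsIdeal κ l J ∧ IsNormal κ l σ γ J

/-- `N` is the smallest `[γ]^{<σ}`-normal ideal on `P_κ(l)`. -/
def IsLeastNormalIdeal (κ : Cardinal.{0}) (l : Ordinal.{0}) (σ : Cardinal.{0}) (γ : Ordinal.{0})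
    (N : Set (Set (Set Ordinal.{0}))) : Prop :=
  IsNormalIdeal κ l σ γ N ∧ ∀ J, IsNormalIdeal κ l σ γ J → N ⊆ J

/-- `∇^δ K`, the ordinal-indexed diagonal union. -/
def nablaOrd (κ : Cardinal.{0}) (l : Ordinal.{0}) (δ : Ordinal.{0})
    (K : Set (Set (Set Ordinal.{0}))) : Set (Set (Set Ordinal.{0})) :=
  {B | ∃ F : Ordinal.{0} → Set (Set Ordinal.{0}),
    (∀ α < δ, F α ∈ K) ∧
    B ⊆ {a | a ∈ PSet κ l ∧ (0 : Ordinal) ∉ a} ∪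
      ⋃ α ∈ Set.Iio δ, {a | a ∈ F α ∧ α ∈ a}}

/-- `J` is `δ`-normal. -/
def IsOrdNormal (κ : Cardinal.{0}) (l : Ordinal.{0}) (δ : Ordinal.{0})
    (J : Set (Set (Set Ordinal.{0}))) : Prop :=
  J = nablaOrd κ l δ J

/-- `θ̄`: equals `θ` if `θ < κ`, or if `θ = κ` and `κ` is a limit cardinal;
equals `ν` if `θ = κ = ν⁺`. -/
noncomputable def thetaBar (κ θ : Cardinal.{0}) : Cardinal.{0} :=
  haveI := Classical.propDecidable (θ < κ ∨ Order.IsSuccLimit κ)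
  if θ < κ ∨ Order.IsSuccLimit κ then θ else sSup {ν | Order.succ ν = κ}

/-- `cof(K)`: the least number of generators of `K`. -/
noncomputable def cofIdeal (K : Set (Set (Set Ordinal.{0}))) : Cardinal.{1} :=
  sInf {c | ∃ S ⊆ K, #↥S = c ∧ ∀ B ∈ K, ∃ C ∈ S, B ⊆ C}

/-- The dominating number `𝔡^μ_{κ,l}`. -/
noncomputable def dNum (κ : Cardinal.{0}) (l : Ordinal.{0}) (μ : Cardinal.{1}) : Cardinal.{1} :=
  sInf {c | ∃ F : Set (μ.ord.ToType → Set Ordinal.{0}),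
    #↥F = c ∧ (∀ f ∈ F, ∀ i, f i ∈ PSet κ l) ∧
    ∀ g : μ.ord.ToType → Set Ordinal.{0}, (∀ i, g i ∈ PSet κ l) →
      ∃ f ∈ F, ∀ i, g i ⊆ f i}

/-- `u(ρ,μ)`: the least cardinality of a cofinal subset of `(P_ρ(μ), ⊆)`. -/
noncomputable def uNum (ρ μ : Cardinal.{0}) : Cardinal.{1} :=
  sInf {c | ∃ X ⊆ PSet ρ μ.ord, #↥X = c ∧ ∀ e ∈ PSet ρ μ.ord, ∃ x ∈ X, e ⊆ x}

/-- `cov(lam, ν, ν, 2)`: the least cardinality of an `X ⊆ P_ν(lam)` such that every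
member of `P_ν(lam)` is contained in a member of `X`. -/
noncomputable def covNum (lam ν : Cardinal.{0}) : Cardinal.{1} :=
  sInf {c | ∃ X ⊆ PSet ν lam.ord, #↥X = c ∧ ∀ e ∈ PSet ν lam.ord, ∃ x ∈ X, e ⊆ x}

/-- `C` is closed unbounded in `l`. -/
def IsClubIn (C : Set Ordinal.{0}) (l : Ordinal.{0}) : Prop :=
  C ⊆ Set.Iio l ∧ (∀ p < l, ∃ q ∈ C, p < q) ∧
    (∀ o < l, Order.IsSuccLimit o → (∀ p < o, ∃ q ∈ C, p < q ∧ q < o) → o ∈ C)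

/-- `κ` is a Mahlo cardinal: the set of regular cardinals below `κ` is stationary in `κ`. -/
def IsMahlo (κ : Cardinal.{0}) : Prop :=
  ∀ C : Set Ordinal.{0}, IsClubIn C κ.ord →
    ∃ o ∈ C, ∃ ρ : Cardinal.{0}, ρ.IsRegular ∧ ρ.ord = o

/-!
Fix an injection `g` of `δ` into `|δ|` and let `D` be the set of `a ∈ P_κ(λ)` closed
under `g` on `a ∩ δ`; its complement is a diagonal union of the non-cofinal sets
`{a | g α ∉ a}`. On `D` a set `e ∈ [δ]^{<θ}` can be transported to `g '' e ∈ [|δ|]^{<θ}`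
without changing its size, so `[|δ|]^{<θ}`-normality of an ideal yields `[δ]^{<θ}`-normality
of its restriction to `D`. Conversely a `[δ]^{<θ}`-normal ideal is `[|δ|]^{<θ}`-normal and
`δ`-normal, so it contains the complement of `D`, and the two least ideals agree on `D`.
-/

section Ideals

variable {κ θ : Cardinal.{0}} {l γ γ' δ : Ordinal.{0}} {J K N : Set (Set (Set Ordinal.{0}))}

lemma finite_mem_PSet (hκ : ℵ₀ ≤ κ) {s : Set Ordinal} (hs : s.Finite) (hsl : s ⊆ Iio l) :
    s ∈ PSet κ l :=
  ⟨hsl, hs.lt_aleph0.trans_le (aleph0_le_lift.mpr hκ)⟩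

lemma empty_mem_PSet (hκ : κ ≠ 0) : (∅ : Set Ordinal) ∈ PSet κ l :=
  ⟨empty_subset _, by simpa [pos_iff_ne_zero] using hκ⟩

lemma singleton_mem_PSet (hκ : 1 < κ) {α : Ordinal} (hα : α < l) : {α} ∈ PSet κ l :=
  ⟨singleton_subset_iff.mpr hα, by simpa using hκ⟩

namespace IsIdeal

lemma empty_mem (hK : IsIdeal κ l K) (hκ : κ ≠ 0) : (∅ : Set (Set Ordinal)) ∈ K :=
  hK.nonCofinal_subset ⟨empty_subset _, ∅, empty_mem_PSet hκ, by simp⟩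

lemma union_mem (hK : IsIdeal κ l K) (hκ : ℵ₀ ≤ κ) {A B : Set (Set Ordinal)}
    (hA : A ∈ K) (hB : B ∈ K) : A ∪ B ∈ K := by
  have hsmall : #↥({A, B} : Set (Set (Set Ordinal))) < Cardinal.lift.{1} κ :=
    (toFinite _).lt_aleph0.trans_le (aleph0_le_lift.mpr hκ)
  simpa using hK.sUnion_mem {A, B} (pair_subset hA hB) (insert_nonempty _ _) hsmall

lemma mem_of_inter_mem_of_diff_mem (hK : IsIdeal κ l K) (hκ : ℵ₀ ≤ κ)
    {B D : Set (Set Ordinal)} (hBD : B ∩ D ∈ K) (hBD' : B \ D ∈ K) : B ∈ K := by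
  simpa only [inter_union_sdiff] using hK.union_mem hκ hBD hBD'

lemma restrict {D : Set (Set Ordinal)} (hK : IsIdeal κ l K) (hD : D ∈ plus κ l K) :
    IsIdeal κ l (restrict κ l K D) where
  mem_subset _ hB := hB.1
  subset_mem B hB C hCB :=
    ⟨hCB.trans hB.1, hK.subset_mem _ hB.2 _ (inter_subset_inter_left D hCB)⟩
  sUnion_mem Y hY hne hsmall := by
    refine ⟨sUnion_subset fun B hB => (hY hB).1, ?_⟩
    rw [sUnion_eq_biUnion, iUnion₂_inter, ← sUnion_image]
    refine hK.sUnion_mem _ ?_ (hne.image _) (mk_image_le.trans_lt hsmall)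
    rintro _ ⟨B, hB, rfl⟩
    exact (hY hB).2
  nonCofinal_subset := fun B ⟨hBP, a, ha, hBa⟩ =>
    ⟨hBP, hK.nonCofinal_subset
      ⟨inter_subset_left.trans hBP, a, ha, fun b hb => hBa b hb.1⟩⟩
  univ_not_mem hP := hD.2 (by simpa [inter_eq_self_of_subset_right hD.1] using hP.2)

lemma subset_nabla (hJ : IsIdeal κ l J) (hθ : θ ≠ 0) : J ⊆ nabla κ l θ γ J := by
  intro B hB
  refine ⟨fun _ => B, fun _ _ => hB, fun a ha => ?_⟩
  rcases (a ∩ Iio θ.ord).eq_empty_or_nonempty with h | h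
  · exact Or.inl ⟨hJ.mem_subset B hB ha, h⟩
  · refine Or.inr (mem_iUnion₂.mpr ⟨∅, empty_mem_PSet hθ, ha, empty_subset _, ?_⟩)
    simpa [pos_iff_ne_zero, mk_ne_zero_iff] using h.to_subtype

end IsIdeal

lemma nabla_mono (hJ : (∅ : Set (Set Ordinal)) ∈ J) (hγ : γ' ≤ γ) :
    nabla κ l θ γ' J ⊆ nabla κ l θ γ J := by
  classical
  have hPSet : PSet θ γ' ⊆ PSet θ γ := fun e he => ⟨he.1.trans (Iio_subset_Iio hγ), he.2⟩
  rintro B ⟨F, hF, hB⟩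
  refine ⟨fun e => if e ∈ PSet θ γ' then F e else ∅,
    fun e _ => by dsimp only; split_ifs with he; exacts [hF e he, hJ], fun a ha => ?_⟩
  rcases hB ha with h | h
  · exact Or.inl h
  · obtain ⟨e, he, hae, hea, hcard⟩ := mem_iUnion₂.mp h
    refine Or.inr (mem_iUnion₂.mpr ⟨e, hPSet he, by simpa [he] using hae, ?_, hcard⟩)
    exact hea.trans (inter_subset_inter_right _ (Iio_subset_Iio hγ))

lemma IsNormalIdeal.mono (hN : IsNormalIdeal κ l θ γ N) (hκ : κ ≠ 0) (hθ : θ ≠ 0)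
    (hγ : γ' ≤ γ) : IsNormalIdeal κ l θ γ' N := by
  refine ⟨hN.1, (hN.1.subset_nabla hθ).antisymm fun B hB => ?_⟩
  rw [hN.2]
  exact nabla_mono (hN.1.empty_mem hκ) hγ hB

lemma nablaOrd_mono (hJK : J ⊆ K) : nablaOrd κ l δ J ⊆ nablaOrd κ l δ K :=
  fun _ ⟨F, hF, hB⟩ => ⟨F, fun α hα => hJK (hF α hα), hB⟩

lemma IsNormalIdeal.nablaOrd_subset (hN : IsNormalIdeal κ l θ δ N) (hκ : ℵ₀ ≤ κ)
    (hθ : 2 ≤ θ) (hl : 1 < l) : nablaOrd κ l δ N ⊆ N := by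
  rintro B ⟨F, hF, hB⟩
  have hθ1 : 1 < θ := Cardinal.one_lt_two.trans_le hθ
  -- Off a non-cofinal set, `a` meets `θ` in at least two points, so `{α}` is small enough;
  -- `sInf` recovers `α` from `{α}`.
  set A : Set (Set Ordinal) := {a | a ∈ PSet κ l ∧ ¬ {0, 1} ⊆ a}
  have hA : A ∈ N := hN.1.nonCofinal_subset ⟨fun a ha => ha.1, {0, 1},
    finite_mem_PSet hκ (toFinite _) (pair_subset (zero_lt_one.trans hl) hl), fun _ hb => hb.2⟩
  have hBA : B \ A ∈ N := by
    rw [hN.2]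
    refine ⟨fun e => if sInf e < δ then F (sInf e) else ∅, fun e _ => ?_, ?_⟩
    · dsimp only
      split_ifs with he
      exacts [hF _ he, hN.1.empty_mem (aleph0_pos.trans_le hκ).ne']
    rintro a ⟨haB, haA⟩
    rcases hB haB with ⟨haP, ha0⟩ | h
    · exact absurd ⟨haP, fun h01 => ha0 (h01 (mem_insert _ _))⟩ haA
    obtain ⟨α, hα, haF, hαa⟩ := mem_iUnion₂.mp h
    have h01 : {0, 1} ⊆ a ∩ Iio θ.ord := by
      refine subset_inter (not_not.mp fun h => haA ⟨hN.1.mem_subset _ (hF α hα) haF, h⟩) ?_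
      have h1θ : (1 : Ordinal) < θ.ord := by simpa [lt_ord] using hθ1
      exact pair_subset (zero_lt_one.trans h1θ) h1θ
    refine Or.inr (mem_iUnion₂.mpr ⟨{α}, singleton_mem_PSet hθ1 hα, ?_,
      singleton_subset_iff.mpr ⟨hαa, hα⟩, ?_⟩)
    · simp [csInf_singleton, show α < δ from hα, haF]
    · rw [mk_singleton, one_lt_iff_nontrivial, nontrivial_coe_sort]
      exact (nontrivial_pair zero_ne_one).mono h01
  exact hN.1.mem_of_inter_mem_of_diff_mem hκ (hN.1.subset_mem _ hA _ inter_subset_right) hBA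

end Ideals

section Transport

variable {κ θ : Cardinal.{0}} {l γ γ' : Ordinal.{0}} {N : Set (Set (Set Ordinal.{0}))}
  {g : Ordinal.{0} → Ordinal.{0}}

lemma exists_injOn_mapsTo_Iio (h : γ.card ≤ γ'.card) :
    ∃ g : Ordinal.{0} → Ordinal.{0}, InjOn g (Iio γ) ∧ MapsTo g (Iio γ) (Iio γ') := by
  classical
  obtain ⟨f⟩ : Nonempty (Iio γ ↪ Iio γ') := by
    rw [← le_def, Cardinal.mk_Iio_ordinal, Cardinal.mk_Iio_ordinal]
    exact lift_le.mpr h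
  refine ⟨fun α => if hα : α < γ then f ⟨α, hα⟩ else 0, fun α hα β hβ hαβ => ?_,
    fun α hα => ?_⟩
  · simp only [mem_Iio] at hα hβ
    exact congrArg Subtype.val (f.injective (Subtype.ext (by simpa [hα, hβ] using hαβ)))
  · simp [mem_Iio.mp hα]

def closedUnder (κ : Cardinal.{0}) (l γ : Ordinal.{0}) (g : Ordinal.{0} → Ordinal.{0}) :
    Set (Set Ordinal.{0}) :=
  {a | a ∈ PSet κ l ∧ ∀ α ∈ a, α < γ → g α ∈ a}

lemma diff_closedUnder_mem_nablaOrd (hκ : ℵ₀ ≤ κ) (hg : MapsTo g (Iio γ) (Iio l)) :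
    PSet κ l \ closedUnder κ l γ g ∈ nablaOrd κ l γ (Ikl κ l) := by
  refine ⟨fun α => {a | a ∈ PSet κ l ∧ g α ∉ a}, fun α hα => ⟨fun a ha => ha.1, {g α},
    singleton_mem_PSet (one_lt_aleph0.trans_le hκ) (hg hα),
    fun b hb hgb => hb.2 (hgb rfl)⟩, ?_⟩
  rintro a ⟨haP, haD⟩
  obtain ⟨α, hαa, hα, hgα⟩ : ∃ α ∈ a, α < γ ∧ g α ∉ a := by
    by_contra! h
    exact haD ⟨haP, h⟩
  exact Or.inr (mem_iUnion₂.mpr ⟨α, hα, ⟨haP, hgα⟩, hαa⟩)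

lemma nabla_restrict_closedUnder_subset (hg : InjOn g (Iio γ)) (hgm : MapsTo g (Iio γ) (Iio γ')) :
    nabla κ l θ γ (restrict κ l N (closedUnder κ l γ g)) ⊆
      restrict κ l (nabla κ l θ γ' N) (closedUnder κ l γ g) := by
  set D := closedUnder κ l γ g
  rintro B ⟨F, hF, hB⟩
  have hcard : ∀ e ⊆ Iio γ, #↥(g '' e) = #↥e := fun e he => mk_image_eq_of_injOn _ _ (hg.mono he)
  refine ⟨fun a ha => ?_, fun e' => F (g ⁻¹' e' ∩ Iio γ) ∩ D, fun e' he' => ?_, ?_⟩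
  · rcases hB ha with h | h
    · exact h.1
    · obtain ⟨e, he, hae, -⟩ := mem_iUnion₂.mp h
      exact (hF e he).1 hae
  · have hsub : g ⁻¹' e' ∩ Iio γ ⊆ Iio γ := inter_subset_right
    refine (hF _ ⟨hsub, ?_⟩).2
    rw [← hcard _ hsub]
    exact (mk_le_mk_of_subset (image_subset_iff.mpr inter_subset_left)).trans_lt he'.2
  rintro a ⟨haB, haD⟩
  rcases hB haB with h | h
  · exact Or.inl h
  obtain ⟨e, he, hae, hea, hcard_lt⟩ := mem_iUnion₂.mp h
  have heγ : e ⊆ Iio γ := fun α hα => (hea hα).2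
  refine Or.inr (mem_iUnion₂.mpr ⟨g '' e, ⟨hgm.mono heγ subset_rfl |>.image_subset, ?_⟩,
    ⟨by rwa [hg.preimage_image_inter heγ], haD⟩, ?_, ?_⟩)
  · exact (hcard e heγ).trans_lt he.2
  · rintro _ ⟨α, hα, rfl⟩
    exact ⟨haD.2 α (hea hα).1 (heγ hα), hgm (heγ hα)⟩
  · exact (hcard e heγ).trans_lt hcard_lt

lemma IsNormalIdeal.restrict_closedUnder (hN : IsNormalIdeal κ l θ γ' N) (hθ : θ ≠ 0)
    (hg : InjOn g (Iio γ)) (hgm : MapsTo g (Iio γ) (Iio γ'))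
    (hD : closedUnder κ l γ g ∈ plus κ l N) :
    IsNormalIdeal κ l θ γ (restrict κ l N (closedUnder κ l γ g)) := by
  have hK := hN.1.restrict hD
  refine ⟨hK, (hK.subset_nabla hθ).antisymm ?_⟩
  exact (nabla_restrict_closedUnder_subset hg hgm).trans_eq (by rw [← hN.2])

end Transport

theorem stmt14_general (κ lam θ : Cardinal.{0}) (δ : Ordinal.{0})
    (hκ : κ.IsRegular) (hkl : κ ≤ lam) (hθ2 : 2 ≤ θ)
    (hdl : δ ≤ lam.ord) :
    ∀ N₁ N₂, IsLeastNormalIdeal κ lam.ord θ δ N₁ →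
      IsLeastNormalIdeal κ lam.ord θ δ.card.ord N₂ →
      ∃ D ∈ star κ lam.ord (nablaOrd κ lam.ord δ (Ikl κ lam.ord)),
        N₁ = restrict κ lam.ord N₂ D := by
  intro N₁ N₂ h₁ h₂
  have hℵ : ℵ₀ ≤ κ := hκ.aleph0_le
  have hκ0 : κ ≠ 0 := (aleph0_pos.trans_le hℵ).ne'
  have hθ0 : θ ≠ 0 := (two_pos.trans_le hθ2).ne'
  have hl : 1 < lam.ord := lt_ord.mpr (by simpa using one_lt_aleph0.trans_le (hℵ.trans hkl))
  have hδ : δ.card.ord ≤ δ := ord_card_le δ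
  obtain ⟨g, hg, hgm⟩ := exists_injOn_mapsTo_Iio (γ := δ) (γ' := δ.card.ord) (by simp)
  set D := closedUnder κ lam.ord δ g
  have hDc : PSet κ lam.ord \ D ∈ nablaOrd κ lam.ord δ (Ikl κ lam.ord) :=
    diff_closedUnder_mem_nablaOrd hℵ (hgm.mono_right (Iio_subset_Iio (hδ.trans hdl)))
  have hDc₁ : PSet κ lam.ord \ D ∈ N₁ :=
    h₁.1.nablaOrd_subset hℵ hθ2 hl (nablaOrd_mono h₁.1.1.nonCofinal_subset hDc)
  have h₂₁ : N₂ ⊆ N₁ := h₂.2 N₁ (h₁.1.mono hκ0 hθ0 hδ)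
  have hD : D ∈ plus κ lam.ord N₂ := ⟨fun a ha => ha.1, fun hD₂ => h₁.1.1.univ_not_mem
    (h₁.1.1.mem_of_inter_mem_of_diff_mem hℵ (by rw [inter_eq_right.mpr fun a ha => ha.1]; exact h₂₁ hD₂) hDc₁)⟩
  refine ⟨D, ⟨hD.1, hDc⟩, (h₁.2 _ (h₂.1.restrict_closedUnder hθ0 hg hgm hD)).antisymm ?_⟩
  rintro B ⟨hB, hBD⟩
  exact h₁.1.1.mem_of_inter_mem_of_diff_mem hℵ (h₂₁ hBD)
    (h₁.1.1.subset_mem _ hDc₁ _ (sdiff_subset_sdiff_left hB))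

/-- Assume `δ ≥ κ` and there exists a `[δ]^{<θ}`-normal ideal on `P_κ(λ)`.
Then there exists `D ∈ (∇^δ I_{κ,λ})*` such that
`NS^{[δ]^{<θ}}_{κ,λ} = NS^{[|δ|]^{<θ}}_{κ,λ} | D`. -/
theorem stmt14 (κ lam θ : Cardinal.{0}) (δ : Ordinal.{0})
    (hκ : κ.IsRegular) (hkl : κ ≤ lam) (hθ2 : 2 ≤ θ) (hθκ : θ ≤ κ)
    (hδ1 : 1 ≤ δ) (hdl : δ ≤ lam.ord) (hκδ : κ.ord ≤ δ)
    (hex : ∃ J, IsNormalIdeal κ lam.ord θ δ J) :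
    ∀ N₁ N₂, IsLeastNormalIdeal κ lam.ord θ δ N₁ →
      IsLeastNormalIdeal κ lam.ord θ δ.card.ord N₂ →
      ∃ D ∈ star κ lam.ord (nablaOrd κ lam.ord δ (Ikl κ lam.ord)),
        N₁ = restrict κ lam.ord N₂ D :=
  stmt14_general κ lam θ δ hκ hkl hθ2 hdl

end PklNormal
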